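/- arXiv:1109.3966 — 6 statements merged into one kernel-verified Lean document; each statement's English description precedes it below -/
import Mathlib

section
/- Let M be a vector space over ℂ, B : M → M → M a ℂ-bilinear map, φ : M → M a ℂ-linear map satisfying the Leibniz rule φ(B(a,b)) = B(φ(a),b) + B(a,φ(b)) for all a,b ∈ M, d : M → M a ℂ-linear map, and Γ ∈ M such that d(φ(A)) − φ(d(A)) = B(Γ,A) for all A ∈ M. Then for every n ≥ 1 and every A ∈ M, d(φ^n(A)) − φ^n(d(A)) = Σ_{k=1}^{n} (n choose k) • B(φ^{k-1}(Γ), φ^{n-k}(A)). -/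
/-!
Write `D n A = d (φ^n A) - φ^n (d A)`. Then `D (n + 1) A = φ (D n A) + B Γ (φ^n A)`, and by the
Leibniz rule `φ` sends `B (φ^i Γ) (φ^j A)` to the sum of the two terms with `i` or `j` raised by
one. Hence the coefficients of `D n A` in these terms obey Pascal's rule, giving `n.choose (i + 1)`
on the term with `i + j + 1 = n`.
-/

open Finset

theorem Finset.sum_Icc_one_succ_eq_sum_antidiagonal {M : Type*} [AddCommMonoid M]
    (h : ℕ → ℕ → M) (m : ℕ) :
    ∑ k ∈ Icc 1 (m + 1), h k (m + 1 - k) = ∑ p ∈ antidiagonal m, h (p.1 + 1) p.2 := by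
  rw [Nat.sum_antidiagonal_eq_sum_range_succ (fun i j => h (i + 1) j),
    ← Ico_add_one_right_eq_Icc, sum_Ico_eq_sum_range]
  simp [add_comm]

theorem Finset.sum_antidiagonal_choose_succ_succ_nsmul {M : Type*} [AddCommMonoid M]
    (f : ℕ → ℕ → M) (m : ℕ) :
    ∑ p ∈ antidiagonal (m + 1), (m + 2).choose (p.1 + 1) • f p.1 p.2
      = ∑ p ∈ antidiagonal m, (m + 1).choose (p.1 + 1) • (f (p.1 + 1) p.2 + f p.1 (p.2 + 1))
        + f 0 (m + 1) := by
  have raise_left : ∑ p ∈ antidiagonal (m + 1), (m + 1).choose p.1 • f p.1 p.2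
      = f 0 (m + 1) + ∑ p ∈ antidiagonal m, (m + 1).choose (p.1 + 1) • f (p.1 + 1) p.2 := by
    rw [Nat.sum_antidiagonal_succ, Nat.choose_zero_right, one_smul]
  have raise_right : ∑ p ∈ antidiagonal (m + 1), (m + 1).choose (p.1 + 1) • f p.1 p.2
      = ∑ p ∈ antidiagonal m, (m + 1).choose (p.1 + 1) • f p.1 (p.2 + 1) := by
    rw [Nat.sum_antidiagonal_succ', Nat.choose_succ_self, zero_smul, zero_add]
  simp only [Nat.choose_succ_succ' (m + 1), add_smul, sum_add_distrib, raise_left, raise_right,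
    smul_add]
  abel

section Intertwining

variable {R M : Type*} [CommSemiring R] [AddCommGroup M] [Module R M]

theorem LinearMap.sub_iterate_succ_comm (d φ : M →ₗ[R] M) (n : ℕ) (A : M) :
    d (φ^[n + 1] A) - φ^[n + 1] (d A)
      = φ (d (φ^[n] A) - φ^[n] (d A)) + (d (φ (φ^[n] A)) - φ (d (φ^[n] A))) := by
  rw [Function.iterate_succ_apply', Function.iterate_succ_apply', map_sub]
  abel

theorem LinearMap.sub_iterate_comm_eq_sum_antidiagonal (B : M →ₗ[R] M →ₗ[R] M)
    (φ : M →ₗ[R] M) (hLeib : ∀ a b : M, φ (B a b) = B (φ a) b + B a (φ b))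
    (d : M →ₗ[R] M) (Γ : M) (hΓ : ∀ A : M, d (φ A) - φ (d A) = B Γ A) (m : ℕ) (A : M) :
    d (φ^[m + 1] A) - φ^[m + 1] (d A)
      = ∑ p ∈ antidiagonal m, (m + 1).choose (p.1 + 1) • B (φ^[p.1] Γ) (φ^[p.2] A) := by
  induction m with
  | zero => simpa using hΓ A
  | succ m ih =>
    have leib_iterate : ∀ i j : ℕ, φ (B (φ^[i] Γ) (φ^[j] A))
        = B (φ^[i + 1] Γ) (φ^[j] A) + B (φ^[i] Γ) (φ^[j + 1] A) := by
      intro i j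
      rw [hLeib, Function.iterate_succ_apply', Function.iterate_succ_apply']
    rw [sub_iterate_succ_comm, ih, hΓ, map_sum,
      sum_antidiagonal_choose_succ_succ_nsmul (fun i j => B (φ^[i] Γ) (φ^[j] A))]
    simp only [map_nsmul, leib_iterate]
    rfl

end Intertwining

/-- If `φ` is a derivation with respect to `B` and `d ∘ φ − φ ∘ d = B Γ ·`,
then the `n`-th iterate of `φ` satisfies the corresponding intertwining formula. -/
theorem iterate_intertwine {M : Type*} [AddCommGroup M] [Module ℂ M]
    (B : M →ₗ[ℂ] M →ₗ[ℂ] M) (φ : M →ₗ[ℂ] M)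
    (hLeib : ∀ a b : M, φ (B a b) = B (φ a) b + B a (φ b))
    (d : M →ₗ[ℂ] M) (Γ : M)
    (hΓ : ∀ A : M, d (φ A) - φ (d A) = B Γ A) :
    ∀ n : ℕ, 1 ≤ n → ∀ A : M,
      d ((⇑φ)^[n] A) - (⇑φ)^[n] (d A)
        = ∑ k ∈ Finset.Icc 1 n,
            (n.choose k) • B ((⇑φ)^[k - 1] Γ) ((⇑φ)^[n - k] A) := by
  rintro n hn A
  obtain ⟨m, rfl⟩ : ∃ m, n = m + 1 := ⟨n - 1, by omega⟩
  rw [LinearMap.sub_iterate_comm_eq_sum_antidiagonal B φ hLeib d Γ hΓ,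
    sum_Icc_one_succ_eq_sum_antidiagonal
      (fun k j => (m + 1).choose k • B (φ^[k - 1] Γ) (φ^[j] A))]
  simp only [Nat.add_sub_cancel]
end

section
/- Let M be a vector space over ℂ, B : M → M → M a ℂ-bilinear map, φ : M → M a ℂ-linear map satisfying the Leibniz rule φ(B(a,b)) = B(φ(a),b) + B(a,φ(b)) for all a,b ∈ M, d : M → M a ℂ-linear map, and Γ ∈ M such that d(Γ) = 0, d(φ(A)) − φ(d(A)) = B(Γ,A) for all A ∈ M, and B(φ^i(Γ), φ^j(Γ)) = B(φ^j(Γ), φ^i(Γ)) for all natural numbers i,j. Then for every n ≥ 2, 2 • d(φ^{n-1}(Γ)) = Σ_{k=1}^{n-1} (n choose k) • B(φ^{k-1}(Γ), φ^{n-1-k}(Γ)). -/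
/-!
Write `Γₙ = φ^[n] Γ`. Commuting `d` past `φ` gives `d Γₙ₊₁ = φ (d Γₙ) + B Γ Γₙ`; together with the
Leibniz rule and Pascal's rule this yields by induction
`d Γₙ₊₁ = ∑_{i + j = n} (n + 1).choose (i + 1) • B Γᵢ Γⱼ`.
Adding this formula to its mirror image under `(i, j) ↦ (j, i)`, which the symmetry hypothesis
allows, doubles the left side, and Pascal's rule turns the coefficients into `(n + 2).choose (i + 1)`.
-/

open Finset

lemma Finset.Nat.sum_Icc_one_eq_sum_antidiagonal {M : Type*} [AddCommMonoid M]
    (g : ℕ → ℕ → M) (m : ℕ) :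
    ∑ k ∈ Icc 1 (m + 1), g k (m + 1 - k) = ∑ p ∈ antidiagonal m, g (p.1 + 1) p.2 := by
  refine sum_nbij' (fun k ↦ (k - 1, m + 1 - k)) (fun p ↦ p.1 + 1) ?_ ?_ ?_ ?_ ?_ <;>
    intro x hx <;>
    simp only [mem_Icc, HasAntidiagonal.mem_antidiagonal, Prod.ext_iff] at hx ⊢
  on_goal 5 => rw [Nat.sub_add_cancel hx.1]
  all_goals omega

section IteratedDifferential

variable {R M : Type*} [CommSemiring R] [AddCommGroup M] [Module R M]
  {B : M →ₗ[R] M →ₗ[R] M} {φ d : M →ₗ[R] M} {Γ : M}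

lemma map_iterate_succ_eq_sum_antidiagonal
    (hLeib : ∀ a b : M, φ (B a b) = B (φ a) b + B a (φ b)) (hdΓ : d Γ = 0)
    (hΓ : ∀ A : M, d (φ A) - φ (d A) = B Γ A) (n : ℕ) :
    d (φ^[n + 1] Γ) = ∑ p ∈ antidiagonal n,
      (n + 1).choose (p.1 + 1) • B (φ^[p.1] Γ) (φ^[p.2] Γ) := by
  induction n with
  | zero => simpa [hdΓ] using hΓ Γ
  | succ n ih =>
    have hrec : d (φ^[n + 2] Γ) = φ (d (φ^[n + 1] Γ)) + B Γ (φ^[n + 1] Γ) := by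
      rw [← sub_eq_iff_eq_add', ← hΓ, Function.iterate_succ_apply']
    -- Pascal's rule splits the right side into the two sums that the Leibniz rule produces
    -- from `φ (d Γₙ₊₁)`; the boundary terms are `B Γ Γₙ₊₁` and zero.
    simp only [Nat.choose_succ_succ (n + 1), add_smul, sum_add_distrib]
    rw [hrec, ih, map_sum, Nat.sum_antidiagonal_succ, Nat.sum_antidiagonal_succ']
    simp only [map_nsmul, hLeib, smul_add, sum_add_distrib, Function.iterate_succ_apply',
      Nat.choose_zero_right, Function.iterate_zero, id_eq, one_smul, Nat.choose_succ_self,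
      zero_nsmul, zero_add]
    abel

lemma two_nsmul_map_iterate_succ_eq_sum_antidiagonal
    (hLeib : ∀ a b : M, φ (B a b) = B (φ a) b + B a (φ b)) (hdΓ : d Γ = 0)
    (hΓ : ∀ A : M, d (φ A) - φ (d A) = B Γ A)
    (hsymm : ∀ i j : ℕ, B (φ^[i] Γ) (φ^[j] Γ) = B (φ^[j] Γ) (φ^[i] Γ)) (n : ℕ) :
    2 • d (φ^[n + 1] Γ) = ∑ p ∈ antidiagonal n,
      (n + 2).choose (p.1 + 1) • B (φ^[p.1] Γ) (φ^[p.2] Γ) := by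
  rw [two_nsmul, map_iterate_succ_eq_sum_antidiagonal hLeib hdΓ hΓ]
  nth_rw 2 [← Nat.sum_antidiagonal_swap]
  rw [← sum_add_distrib]
  refine sum_congr rfl fun p hp ↦ ?_
  rw [HasAntidiagonal.mem_antidiagonal] at hp
  rw [Prod.fst_swap, Prod.snd_swap, hsymm p.2, ← add_smul,
    Nat.choose_symm_of_eq_add (by omega : n + 1 = p.2 + 1 + p.1),
    Nat.choose_succ_succ' (n + 1), add_comm]

end IteratedDifferential

/-- The Maurer–Cartan-type identity for the iterates of `φ` applied to `Γ`. -/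
theorem iterate_maurer_cartan {M : Type*} [AddCommGroup M] [Module ℂ M]
    (B : M →ₗ[ℂ] M →ₗ[ℂ] M) (φ : M →ₗ[ℂ] M)
    (hLeib : ∀ a b : M, φ (B a b) = B (φ a) b + B a (φ b))
    (d : M →ₗ[ℂ] M) (Γ : M)
    (hdΓ : d Γ = 0)
    (hΓ : ∀ A : M, d (φ A) - φ (d A) = B Γ A)
    (hsymm : ∀ i j : ℕ, B ((⇑φ)^[i] Γ) ((⇑φ)^[j] Γ) = B ((⇑φ)^[j] Γ) ((⇑φ)^[i] Γ)) :
    ∀ n : ℕ, 2 ≤ n →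
      2 • d ((⇑φ)^[n - 1] Γ)
        = ∑ k ∈ Finset.Icc 1 (n - 1),
            (n.choose k) • B ((⇑φ)^[k - 1] Γ) ((⇑φ)^[n - 1 - k] Γ) := by
  intro n hn
  obtain ⟨m, rfl⟩ := Nat.exists_eq_add_of_le' hn
  rw [show m + 2 - 1 = m + 1 from rfl,
    Nat.sum_Icc_one_eq_sum_antidiagonal (fun k l ↦ (m + 2).choose k • B (φ^[k - 1] Γ) (φ^[l] Γ))]
  simpa using two_nsmul_map_iterate_succ_eq_sum_antidiagonal hLeib hdΓ hΓ hsymm m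
end

section
/- Let 𝔤 be a real Lie algebra with underlying vector space V, let ω be a nondegenerate alternating bilinear form on 𝔤 that is closed (ω([x,y],z) + ω([y,z],x) + ω([z,x],y) = 0 for all x,y,z), and let γ : 𝔤 → End(V) be a linear map that is torsion-free (γ(x)y − γ(y)x = [x,y]), symplectic (ω(γ(x)y,z) + ω(y,γ(x)z) = 0), and flat (γ([x,y]) = γ(x)γ(y) − γ(y)γ(x)). Define on 𝔥 = 𝔤 × V the bracket [(x,u),(y,v)] = ([x,y], γ(x)v − γ(y)u), and the linear map J : 𝔥 → 𝔥 by J(x,u) = (−u,x). Then J ∘ J = −id, and the Nijenhuis expression vanishes: for all h₁,h₂ ∈ 𝔥, [J(h₁), J(h₂)] − [h₁,h₂] − J([J(h₁),h₂]) − J([h₁,J(h₂)]) = 0. -/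
def nijenhuis {H : Type*} [Sub H] (br : H → H → H) (J : H → H) (h₁ h₂ : H) : H :=
  br (J h₁) (J h₂) - br h₁ h₂ - J (br (J h₁) h₂) - J (br h₁ (J h₂))

def prodRotate {L : Type*} [Neg L] (h : L × L) : L × L := (-h.2, h.1)

theorem prodRotate_prodRotate {L : Type*} [Neg L] (h : L × L) :
    prodRotate (prodRotate h) = -h := rfl

section Semidirect

variable {R L : Type*} [CommRing R] [LieRing L] [Module R L]

def semidirectBracket (γ : L →ₗ[R] Module.End R L) (h₁ h₂ : L × L) : L × L :=
  (⁅h₁.1, h₂.1⁆, γ h₁.1 h₂.2 - γ h₂.1 h₁.2)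

/-- Each component of the Nijenhuis tensor is a sum of two torsion terms `γ a b - γ b a - ⁅a, b⁆`. -/
theorem nijenhuis_semidirectBracket_prodRotate {γ : L →ₗ[R] Module.End R L}
    (h_tf : ∀ x y : L, γ x y - γ y x = ⁅x, y⁆) (h₁ h₂ : L × L) :
    nijenhuis (semidirectBracket γ) prodRotate h₁ h₂ = 0 := by
  obtain ⟨x, u⟩ := h₁
  obtain ⟨y, v⟩ := h₂
  simp only [nijenhuis, semidirectBracket, prodRotate, Prod.ext_iff, Prod.fst_sub, Prod.snd_sub,
    Prod.fst_zero, Prod.snd_zero, map_neg, LinearMap.neg_apply, lie_neg, neg_lie, neg_neg]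
  constructor
  · rw [← h_tf u v, ← h_tf x y]
    abel
  · rw [← h_tf u y, ← h_tf x v]
    abel

end Semidirect

theorem semidirect_complex_structure_general {𝔤 : Type*} [LieRing 𝔤] [LieAlgebra ℝ 𝔤]
    (γ : 𝔤 →ₗ[ℝ] Module.End ℝ 𝔤)
    (h_tf : ∀ x y : 𝔤, γ x y - γ y x = ⁅x, y⁆)
    (br : (𝔤 × 𝔤) → (𝔤 × 𝔤) → (𝔤 × 𝔤))
    (hbr : ∀ x u y v : 𝔤, br (x, u) (y, v) = (⁅x, y⁆, γ x v - γ y u))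
    (J : (𝔤 × 𝔤) →ₗ[ℝ] (𝔤 × 𝔤))
    (hJ : ∀ x u : 𝔤, J (x, u) = (-u, x)) :
    (∀ h : 𝔤 × 𝔤, J (J h) = -h) ∧
    (∀ h₁ h₂ : 𝔤 × 𝔤,
      br (J h₁) (J h₂) - br h₁ h₂ - J (br (J h₁) h₂) - J (br h₁ (J h₂)) = 0) := by
  have hJ_eq : ⇑J = prodRotate := funext fun ⟨x, u⟩ => hJ x u
  have hbr_eq : br = semidirectBracket γ := funext fun ⟨x, u⟩ => funext fun ⟨y, v⟩ => hbr x u y v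
  rw [hJ_eq, hbr_eq]
  exact ⟨prodRotate_prodRotate, nijenhuis_semidirectBracket_prodRotate h_tf⟩

/-- The almost complex structure `J(x,u) = (−u,x)` on the semi-direct product
`𝔥 = 𝔤 ⋉ V` built from a torsion-free flat symplectic connection `γ` squares
to `−id` and has vanishing Nijenhuis expression. -/
theorem semidirect_complex_structure {𝔤 : Type*} [LieRing 𝔤] [LieAlgebra ℝ 𝔤]
    (ω : 𝔤 →ₗ[ℝ] 𝔤 →ₗ[ℝ] ℝ)
    (hω_alt : ∀ x : 𝔤, ω x x = 0)
    (hω_nd : ∀ x : 𝔤, (∀ y : 𝔤, ω x y = 0) → x = 0)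
    (hω_cl : ∀ x y z : 𝔤, ω ⁅x, y⁆ z + ω ⁅y, z⁆ x + ω ⁅z, x⁆ y = 0)
    (γ : 𝔤 →ₗ[ℝ] Module.End ℝ 𝔤)
    (h_tf : ∀ x y : 𝔤, γ x y - γ y x = ⁅x, y⁆)
    (h_symp : ∀ x y z : 𝔤, ω (γ x y) z + ω y (γ x z) = 0)
    (h_flat : ∀ x y v : 𝔤, γ ⁅x, y⁆ v = γ x (γ y v) - γ y (γ x v))
    (br : (𝔤 × 𝔤) → (𝔤 × 𝔤) → (𝔤 × 𝔤))
    (hbr : ∀ x u y v : 𝔤, br (x, u) (y, v) = (⁅x, y⁆, γ x v - γ y u))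
    (J : (𝔤 × 𝔤) →ₗ[ℝ] (𝔤 × 𝔤))
    (hJ : ∀ x u : 𝔤, J (x, u) = (-u, x)) :
    (∀ h : 𝔤 × 𝔤, J (J h) = -h) ∧
    (∀ h₁ h₂ : 𝔤 × 𝔤,
      br (J h₁) (J h₂) - br h₁ h₂ - J (br (J h₁) h₂) - J (br h₁ (J h₂)) = 0) :=
  semidirect_complex_structure_general γ h_tf br hbr J hJ
end

section
/- Let 𝔤 be a real Lie algebra with underlying vector space V, let ω be a nondegenerate alternating bilinear form on 𝔤 that is closed (ω([x,y],z) + ω([y,z],x) + ω([z,x],y) = 0 for all x,y,z), and let γ : 𝔤 → End(V) be a linear map that is torsion-free (γ(x)y − γ(y)x = [x,y]), symplectic (ω(γ(x)y,z) + ω(y,γ(x)z) = 0), and flat (γ([x,y]) = γ(x)γ(y) − γ(y)γ(x)). Define on 𝔥 = 𝔤 × V the bracket [(x,u),(y,v)] = ([x,y], γ(x)v − γ(y)u), and the bilinear form Ω₂((x,u),(y,v)) = ω(x,y) − ω(u,v). Then Ω₂ is alternating, nondegenerate, and closed: Ω₂([h₁,h₂],h₃) + Ω₂([h₂,h₃],h₁)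 + Ω₂([h₃,h₁],h₂) = 0 for all h₁,h₂,h₃ ∈ 𝔥. -/
/-!
Alternation and nondegeneracy of `Ω₂` are inherited componentwise from `ω`. For closedness,
the `𝔤`-components of the cyclic sum form the cyclic sum of `ω`, which vanishes, while the
`V`-components cancel in pairs: each `γ x` is `ω`-skew, so `(v, w) ↦ ω (γ x v) w` is symmetric.
-/

namespace LinearMap

variable {R M N : Type*} [CommRing R] [AddCommGroup M] [Module R M] [AddCommGroup N] [Module R N]

theorem IsAlt.apply_apply_comm_of_skew {ω : M →ₗ[R] M →ₗ[R] R} (hω : ω.IsAlt)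
    {f : Module.End R M} (hf : ∀ y z, ω (f y) z + ω y (f z) = 0) (v w : M) :
    ω (f v) w = ω (f w) v := by
  linear_combination hf v w + hω.neg v (f w)

theorem IsAlt.cyclic_sum_apply_sub_eq_zero {L : Type*} {ω : M →ₗ[R] M →ₗ[R] R} (hω : ω.IsAlt)
    (γ : L → Module.End R M) (hγ : ∀ x y z, ω (γ x y) z + ω y (γ x z) = 0)
    (x y z : L) (u v w : M) :
    ω (γ x v - γ y u) w + ω (γ y w - γ z v) u + ω (γ z u - γ x w) v = 0 := by
  simp only [map_sub, sub_apply]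
  linear_combination hω.apply_apply_comm_of_skew (hγ x) v w
    + hω.apply_apply_comm_of_skew (hγ y) w u + hω.apply_apply_comm_of_skew (hγ z) u v

theorem SeparatingLeft.eq_zero_of_forall_apply_sub_apply_eq_zero
    {ω₁ : M →ₗ[R] M →ₗ[R] R} {ω₂ : N →ₗ[R] N →ₗ[R] R}
    (h₁ : ω₁.SeparatingLeft) (h₂ : ω₂.SeparatingLeft) {x : M} {u : N}
    (h : ∀ y v, ω₁ x y - ω₂ u v = 0) : x = 0 ∧ u = 0 :=
  ⟨h₁ x fun y => by simpa using h y 0, h₂ u fun v => by simpa using h 0 v⟩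

end LinearMap

theorem semidirect_Omega2_symplectic_general {𝔤 : Type*} [LieRing 𝔤] [LieAlgebra ℝ 𝔤]
    (ω : 𝔤 →ₗ[ℝ] 𝔤 →ₗ[ℝ] ℝ)
    (hω_alt : ∀ x : 𝔤, ω x x = 0)
    (hω_nd : ∀ x : 𝔤, (∀ y : 𝔤, ω x y = 0) → x = 0)
    (hω_cl : ∀ x y z : 𝔤, ω ⁅x, y⁆ z + ω ⁅y, z⁆ x + ω ⁅z, x⁆ y = 0)
    (γ : 𝔤 →ₗ[ℝ] Module.End ℝ 𝔤)
    (h_symp : ∀ x y z : 𝔤, ω (γ x y) z + ω y (γ x z) = 0)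
    (br : (𝔤 × 𝔤) → (𝔤 × 𝔤) → (𝔤 × 𝔤))
    (hbr : ∀ x u y v : 𝔤, br (x, u) (y, v) = (⁅x, y⁆, γ x v - γ y u))
    (Ω₂ : (𝔤 × 𝔤) → (𝔤 × 𝔤) → ℝ)
    (hΩ₂ : ∀ x u y v : 𝔤, Ω₂ (x, u) (y, v) = ω x y - ω u v) :
    (∀ h : 𝔤 × 𝔤, Ω₂ h h = 0) ∧
    (∀ h : 𝔤 × 𝔤, (∀ h' : 𝔤 × 𝔤, Ω₂ h h' = 0) → h = 0) ∧
    (∀ h₁ h₂ h₃ : 𝔤 × 𝔤,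
      Ω₂ (br h₁ h₂) h₃ + Ω₂ (br h₂ h₃) h₁ + Ω₂ (br h₃ h₁) h₂ = 0) := by
  have hω : ω.IsAlt := hω_alt
  refine ⟨fun ⟨x, u⟩ => ?_, fun ⟨x, u⟩ hΩ₂_eq_zero => ?_, fun ⟨x, u⟩ ⟨y, v⟩ ⟨z, w⟩ => ?_⟩
  · rw [hΩ₂, hω_alt, hω_alt, sub_zero]
  · obtain ⟨rfl, rfl⟩ := LinearMap.SeparatingLeft.eq_zero_of_forall_apply_sub_apply_eq_zero
      hω_nd hω_nd fun y v => hΩ₂ x u y v ▸ hΩ₂_eq_zero (y, v)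
    rfl
  · rw [hbr, hbr, hbr, hΩ₂, hΩ₂, hΩ₂]
    linear_combination hω_cl x y z - hω.cyclic_sum_apply_sub_eq_zero γ h_symp x y z u v w

/-- The form `Ω₂((x,u),(y,v)) = ω(x,y) − ω(u,v)` on the semi-direct product
`𝔥 = 𝔤 ⋉ V` is an alternating, nondegenerate, closed 2-form. -/
theorem semidirect_Omega2_symplectic {𝔤 : Type*} [LieRing 𝔤] [LieAlgebra ℝ 𝔤]
    (ω : 𝔤 →ₗ[ℝ] 𝔤 →ₗ[ℝ] ℝ)
    (hω_alt : ∀ x : 𝔤, ω x x = 0)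
    (hω_nd : ∀ x : 𝔤, (∀ y : 𝔤, ω x y = 0) → x = 0)
    (hω_cl : ∀ x y z : 𝔤, ω ⁅x, y⁆ z + ω ⁅y, z⁆ x + ω ⁅z, x⁆ y = 0)
    (γ : 𝔤 →ₗ[ℝ] Module.End ℝ 𝔤)
    (h_tf : ∀ x y : 𝔤, γ x y - γ y x = ⁅x, y⁆)
    (h_symp : ∀ x y z : 𝔤, ω (γ x y) z + ω y (γ x z) = 0)
    (h_flat : ∀ x y v : 𝔤, γ ⁅x, y⁆ v = γ x (γ y v) - γ y (γ x v))
    (br : (𝔤 × 𝔤) → (𝔤 × 𝔤) → (𝔤 × 𝔤))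
    (hbr : ∀ x u y v : 𝔤, br (x, u) (y, v) = (⁅x, y⁆, γ x v - γ y u))
    (Ω₂ : (𝔤 × 𝔤) → (𝔤 × 𝔤) → ℝ)
    (hΩ₂ : ∀ x u y v : 𝔤, Ω₂ (x, u) (y, v) = ω x y - ω u v) :
    (∀ h : 𝔤 × 𝔤, Ω₂ h h = 0) ∧
    (∀ h : 𝔤 × 𝔤, (∀ h' : 𝔤 × 𝔤, Ω₂ h h' = 0) → h = 0) ∧
    (∀ h₁ h₂ h₃ : 𝔤 × 𝔤,
      Ω₂ (br h₁ h₂) h₃ + Ω₂ (br h₂ h₃) h₁ + Ω₂ (br h₃ h₁) h₂ = 0) :=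
  semidirect_Omega2_symplectic_general ω hω_alt hω_nd hω_cl γ h_symp br hbr Ω₂ hΩ₂
end

section
/- Let 𝔤 be a real Lie algebra with underlying vector space V, let ω be a nondegenerate alternating bilinear form on 𝔤 that is closed (ω([x,y],z) + ω([y,z],x) + ω([z,x],y) = 0 for all x,y,z), and let γ : 𝔤 → End(V) be a linear map that is torsion-free (γ(x)y − γ(y)x = [x,y]), symplectic (ω(γ(x)y,z) + ω(y,γ(x)z) = 0), and flat (γ([x,y]) = γ(x)γ(y) − γ(y)γ(x)). Define on 𝔥 = 𝔤 × V the bracket [(x,u),(y,v)] = ([x,y], γ(x)v − γ(y)u), and the bilinear form Ω₃((x,u),(y,v)) = ω(x,y) + ω(u,v). Then Ω₃ is alternating, nondegenerate, and closed: Ω₃([h₁,h₂],h₃) + Ω₃([h₂,h₃],h₁) + Ω₃([h₃,h₁],h₂) = 0 for all h₁,h₂,h₃ ∈ 𝔥. -/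
/-!
Alternation and nondegeneracy of `Ω₃ = ω ⊕ ω` are inherited factorwise. For closedness, the
`𝔤`-components of the cyclic sum form the cyclic sum for `ω`, which vanishes, and the
`V`-components cancel in pairs: an endomorphism `f` that is skew for an alternating form `σ`
satisfies `σ (f y) z = σ (f z) y`.
-/

namespace LinearMap

section prodForm

variable {R M N P : Type*} [CommSemiring R] [AddCommMonoid M] [Module R M]
  [AddCommMonoid N] [Module R N] [AddCommMonoid P] [Module R P]
  {B : M →ₗ[R] M →ₗ[R] P} {C : N →ₗ[R] N →ₗ[R] P}

def prodForm (B : M →ₗ[R] M →ₗ[R] P) (C : N →ₗ[R] N →ₗ[R] P) :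
    M × N →ₗ[R] M × N →ₗ[R] P :=
  B.compl₁₂ (fst R M N) (fst R M N) + C.compl₁₂ (snd R M N) (snd R M N)

@[simp]
theorem prodForm_apply (h h' : M × N) : B.prodForm C h h' = B h.1 h'.1 + C h.2 h'.2 :=
  rfl

theorem IsAlt.prodForm (hB : B.IsAlt) (hC : C.IsAlt) : (B.prodForm C).IsAlt := fun h => by
  rw [prodForm_apply, hB, hC, add_zero]

theorem SeparatingLeft.prodForm (hB : B.SeparatingLeft) (hC : C.SeparatingLeft) :
    (B.prodForm C).SeparatingLeft := by
  rintro ⟨x, u⟩ h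
  have hx : x = 0 := hB x fun y => by simpa using h (y, 0)
  have hu : u = 0 := hC u fun v => by simpa using h (0, v)
  rw [hx, hu, Prod.mk_zero_zero]

end prodForm

section skewEndomorphism

variable {R M P ι : Type*} [CommSemiring R] [AddCommGroup M] [Module R M]
  [AddCommGroup P] [Module R P] {σ : M →ₗ[R] M →ₗ[R] P}

theorem IsAlt.apply_skew_comm (hσ : σ.IsAlt) {f : Module.End R M}
    (hf : ∀ y z, σ (f y) z + σ y (f z) = 0) (y z : M) : σ (f y) z = σ (f z) y := by
  rw [eq_neg_of_add_eq_zero_left (hf y z), hσ.neg]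

theorem IsAlt.cyclic_sum_skew_sub_eq_zero (hσ : σ.IsAlt) {γ : ι → Module.End R M}
    (hγ : ∀ x y z, σ (γ x y) z + σ y (γ x z) = 0) (x₁ x₂ x₃ : ι) (u₁ u₂ u₃ : M) :
    σ (γ x₁ u₂ - γ x₂ u₁) u₃ + σ (γ x₂ u₃ - γ x₃ u₂) u₁ + σ (γ x₃ u₁ - γ x₁ u₃) u₂ = 0 := by
  simp only [map_sub, sub_apply]
  rw [hσ.apply_skew_comm (hγ x₁) u₂, hσ.apply_skew_comm (hγ x₂) u₃,
    hσ.apply_skew_comm (hγ x₃) u₁]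
  abel

end skewEndomorphism

end LinearMap

open LinearMap in
theorem semidirect_Omega3_symplectic_general {𝔤 : Type*} [LieRing 𝔤] [LieAlgebra ℝ 𝔤]
    (ω : 𝔤 →ₗ[ℝ] 𝔤 →ₗ[ℝ] ℝ)
    (hω_alt : ∀ x : 𝔤, ω x x = 0)
    (hω_nd : ∀ x : 𝔤, (∀ y : 𝔤, ω x y = 0) → x = 0)
    (hω_cl : ∀ x y z : 𝔤, ω ⁅x, y⁆ z + ω ⁅y, z⁆ x + ω ⁅z, x⁆ y = 0)
    (γ : 𝔤 →ₗ[ℝ] Module.End ℝ 𝔤)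
    (h_symp : ∀ x y z : 𝔤, ω (γ x y) z + ω y (γ x z) = 0)
    (br : (𝔤 × 𝔤) → (𝔤 × 𝔤) → (𝔤 × 𝔤))
    (hbr : ∀ x u y v : 𝔤, br (x, u) (y, v) = (⁅x, y⁆, γ x v - γ y u))
    (Ω₃ : (𝔤 × 𝔤) → (𝔤 × 𝔤) → ℝ)
    (hΩ₃ : ∀ x u y v : 𝔤, Ω₃ (x, u) (y, v) = ω x y + ω u v) :
    (∀ h : 𝔤 × 𝔤, Ω₃ h h = 0) ∧
    (∀ h : 𝔤 × 𝔤, (∀ h' : 𝔤 × 𝔤, Ω₃ h h' = 0) → h = 0) ∧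
    (∀ h₁ h₂ h₃ : 𝔤 × 𝔤,
      Ω₃ (br h₁ h₂) h₃ + Ω₃ (br h₂ h₃) h₁ + Ω₃ (br h₃ h₁) h₂ = 0) := by
  obtain rfl : Ω₃ = fun h h' => ω.prodForm ω h h' :=
    funext₂ fun h h' => hΩ₃ h.1 h.2 h'.1 h'.2
  refine ⟨IsAlt.prodForm hω_alt hω_alt, SeparatingLeft.prodForm hω_nd hω_nd, ?_⟩
  rintro ⟨x₁, u₁⟩ ⟨x₂, u₂⟩ ⟨x₃, u₃⟩
  simp only [hbr, prodForm_apply]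
  linear_combination hω_cl x₁ x₂ x₃ +
    IsAlt.cyclic_sum_skew_sub_eq_zero hω_alt h_symp x₁ x₂ x₃ u₁ u₂ u₃

/-- The form `Ω₃((x,u),(y,v)) = ω(x,y) + ω(u,v)` on the semi-direct product
`𝔥 = 𝔤 ⋉ V` is an alternating, nondegenerate, closed 2-form. -/
theorem semidirect_Omega3_symplectic {𝔤 : Type*} [LieRing 𝔤] [LieAlgebra ℝ 𝔤]
    (ω : 𝔤 →ₗ[ℝ] 𝔤 →ₗ[ℝ] ℝ)
    (hω_alt : ∀ x : 𝔤, ω x x = 0)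
    (hω_nd : ∀ x : 𝔤, (∀ y : 𝔤, ω x y = 0) → x = 0)
    (hω_cl : ∀ x y z : 𝔤, ω ⁅x, y⁆ z + ω ⁅y, z⁆ x + ω ⁅z, x⁆ y = 0)
    (γ : 𝔤 →ₗ[ℝ] Module.End ℝ 𝔤)
    (h_tf : ∀ x y : 𝔤, γ x y - γ y x = ⁅x, y⁆)
    (h_symp : ∀ x y z : 𝔤, ω (γ x y) z + ω y (γ x z) = 0)
    (h_flat : ∀ x y v : 𝔤, γ ⁅x, y⁆ v = γ x (γ y v) - γ y (γ x v))
    (br : (𝔤 × 𝔤) → (𝔤 × 𝔤) → (𝔤 × 𝔤))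
    (hbr : ∀ x u y v : 𝔤, br (x, u) (y, v) = (⁅x, y⁆, γ x v - γ y u))
    (Ω₃ : (𝔤 × 𝔤) → (𝔤 × 𝔤) → ℝ)
    (hΩ₃ : ∀ x u y v : 𝔤, Ω₃ (x, u) (y, v) = ω x y + ω u v) :
    (∀ h : 𝔤 × 𝔤, Ω₃ h h = 0) ∧
    (∀ h : 𝔤 × 𝔤, (∀ h' : 𝔤 × 𝔤, Ω₃ h h' = 0) → h = 0) ∧
    (∀ h₁ h₂ h₃ : 𝔤 × 𝔤,
      Ω₃ (br h₁ h₂) h₃ + Ω₃ (br h₂ h₃) h₁ + Ω₃ (br h₃ h₁) h₂ = 0) :=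
  semidirect_Omega3_symplectic_general ω hω_alt hω_nd hω_cl γ h_symp br hbr Ω₃ hΩ₃
end

section
/- Let 𝔤 be a real Lie algebra with underlying vector space V, let ω be a nondegenerate alternating bilinear form on 𝔤 that is closed (ω([x,y],z) + ω([y,z],x) + ω([z,x],y) = 0 for all x,y,z), and let γ : 𝔤 → End(V) be a linear map that is torsion-free (γ(x)y − γ(y)x = [x,y]), symplectic (ω(γ(x)y,z) + ω(y,γ(x)z) = 0), and flat (γ([x,y]) = γ(x)γ(y) − γ(y)γ(x)). Let g be a nondegenerate symmetric bilinear form on 𝔤. Define on 𝔥 = 𝔤 × V the bracket [(x,u),(y,v)] = ([x,y], γ(x)v − γ(y)u) and the bilinear form Ω₄((x,u),(y,v)) = g(x,v) − g(y,u). Then Ω₄ is closed (Ω₄([h₁,h₂],h₃) + Ω₄([h₂,h₃],h₁) + Ω₄([h₃,h₁],h₂) = 0 for all h₁,h₂,h₃ ∈ 𝔥) if and only if for all x,y,w ∈ 𝔤: g(γ(x)y,w) − g(γ(y)x,w) − g(x,γ(y)w) + g(y,γ(x)w) = 0. -/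
/-!
Expanding the cyclic sum for `h₁ = (x,u)`, `h₂ = (y,v)`, `h₃ = (z,w)` and sorting the terms by
the `V`-component they pair with, it splits as `D(x,y,w) + D(y,z,u) + D(z,x,v)` where
`D(x,y,w) = g([x,y],w) − g(x,γ(y)w) + g(y,γ(x)w)`. Taking `h₁ = (x,0)`, `h₂ = (y,0)`, `h₃ = (0,w)`
isolates a single `D(x,y,w)`, so closedness means exactly `D = 0`, and torsion-freeness turns
`g([x,y],w)` into `g(γ(x)y,w) − g(γ(y)x,w)`.
-/

namespace SemidirectProduct

variable {R L M : Type*} [CommRing R] [LieRing L] [Module R L] [AddCommGroup M] [Module R M]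

def bracket (ρ : L →ₗ[R] Module.End R M) (h₁ h₂ : L × M) : L × M :=
  (⁅h₁.1, h₂.1⁆, ρ h₁.1 h₂.2 - ρ h₂.1 h₁.2)

def pairingForm (B : L →ₗ[R] M →ₗ[R] R) (h₁ h₂ : L × M) : R :=
  B h₁.1 h₂.2 - B h₂.1 h₁.2

def closednessDefect (ρ : L →ₗ[R] Module.End R M) (B : L →ₗ[R] M →ₗ[R] R) (x y : L) (w : M) :
    R :=
  B ⁅x, y⁆ w - B x (ρ y w) + B y (ρ x w)

variable (ρ : L →ₗ[R] Module.End R M) (B : L →ₗ[R] M →ₗ[R] R)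

theorem pairingForm_cyclic_sum (x y z : L) (u v w : M) :
    pairingForm B (bracket ρ (x, u) (y, v)) (z, w) + pairingForm B (bracket ρ (y, v) (z, w)) (x, u)
        + pairingForm B (bracket ρ (z, w) (x, u)) (y, v)
      = closednessDefect ρ B x y w + closednessDefect ρ B y z u + closednessDefect ρ B z x v := by
  simp only [pairingForm, bracket, closednessDefect, map_sub]
  ring

theorem pairingForm_closed_iff :
    (∀ h₁ h₂ h₃ : L × M, pairingForm B (bracket ρ h₁ h₂) h₃ + pairingForm B (bracket ρ h₂ h₃) h₁
        + pairingForm B (bracket ρ h₃ h₁) h₂ = 0)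
      ↔ ∀ (x y : L) (w : M), closednessDefect ρ B x y w = 0 := by
  constructor
  · intro hclosed x y w
    have h := pairingForm_cyclic_sum ρ B x y 0 0 0 w
    simpa [closednessDefect, hclosed] using h.symm
  · rintro hD ⟨x, u⟩ ⟨y, v⟩ ⟨z, w⟩
    rw [pairingForm_cyclic_sum, hD, hD, hD, add_zero, add_zero]

end SemidirectProduct

open SemidirectProduct in
theorem semidirect_Omega4_closed_iff_general {𝔤 : Type*} [LieRing 𝔤] [LieAlgebra ℝ 𝔤]
    (γ : 𝔤 →ₗ[ℝ] Module.End ℝ 𝔤)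
    (h_tf : ∀ x y : 𝔤, γ x y - γ y x = ⁅x, y⁆)
    (g : 𝔤 →ₗ[ℝ] 𝔤 →ₗ[ℝ] ℝ)
    (br : (𝔤 × 𝔤) → (𝔤 × 𝔤) → (𝔤 × 𝔤))
    (hbr : ∀ x u y v : 𝔤, br (x, u) (y, v) = (⁅x, y⁆, γ x v - γ y u))
    (Ω₄ : (𝔤 × 𝔤) → (𝔤 × 𝔤) → ℝ)
    (hΩ₄ : ∀ x u y v : 𝔤, Ω₄ (x, u) (y, v) = g x v - g y u) :
    (∀ h₁ h₂ h₃ : 𝔤 × 𝔤,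
        Ω₄ (br h₁ h₂) h₃ + Ω₄ (br h₂ h₃) h₁ + Ω₄ (br h₃ h₁) h₂ = 0)
      ↔ (∀ x y w : 𝔤,
          g (γ x y) w - g (γ y x) w - g x (γ y w) + g y (γ x w) = 0) := by
  obtain rfl : br = bracket γ := funext₂ fun ⟨x, u⟩ ⟨y, v⟩ => hbr x u y v
  obtain rfl : Ω₄ = pairingForm g := funext₂ fun ⟨x, u⟩ ⟨y, v⟩ => hΩ₄ x u y v
  rw [pairingForm_closed_iff]
  simp only [closednessDefect, ← h_tf, map_sub, LinearMap.sub_apply]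

/-- The form `Ω₄((x,u),(y,v)) = g(x,v) − g(y,u)` on the semi-direct product
`𝔥 = 𝔤 ⋉ V` is closed if and only if
`g(γ(x)y,w) − g(γ(y)x,w) − g(x,γ(y)w) + g(y,γ(x)w) = 0` for all `x,y,w`. -/
theorem semidirect_Omega4_closed_iff {𝔤 : Type*} [LieRing 𝔤] [LieAlgebra ℝ 𝔤]
    (ω : 𝔤 →ₗ[ℝ] 𝔤 →ₗ[ℝ] ℝ)
    (hω_alt : ∀ x : 𝔤, ω x x = 0)
    (hω_nd : ∀ x : 𝔤, (∀ y : 𝔤, ω x y = 0) → x = 0)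
    (hω_cl : ∀ x y z : 𝔤, ω ⁅x, y⁆ z + ω ⁅y, z⁆ x + ω ⁅z, x⁆ y = 0)
    (γ : 𝔤 →ₗ[ℝ] Module.End ℝ 𝔤)
    (h_tf : ∀ x y : 𝔤, γ x y - γ y x = ⁅x, y⁆)
    (h_symp : ∀ x y z : 𝔤, ω (γ x y) z + ω y (γ x z) = 0)
    (h_flat : ∀ x y v : 𝔤, γ ⁅x, y⁆ v = γ x (γ y v) - γ y (γ x v))
    (g : 𝔤 →ₗ[ℝ] 𝔤 →ₗ[ℝ] ℝ)
    (hg_symm : ∀ x y : 𝔤, g x y = g y x)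
    (hg_nd : ∀ x : 𝔤, (∀ y : 𝔤, g x y = 0) → x = 0)
    (br : (𝔤 × 𝔤) → (𝔤 × 𝔤) → (𝔤 × 𝔤))
    (hbr : ∀ x u y v : 𝔤, br (x, u) (y, v) = (⁅x, y⁆, γ x v - γ y u))
    (Ω₄ : (𝔤 × 𝔤) → (𝔤 × 𝔤) → ℝ)
    (hΩ₄ : ∀ x u y v : 𝔤, Ω₄ (x, u) (y, v) = g x v - g y u) :
    (∀ h₁ h₂ h₃ : 𝔤 × 𝔤,
        Ω₄ (br h₁ h₂) h₃ + Ω₄ (br h₂ h₃) h₁ + Ω₄ (br h₃ h₁) h₂ = 0)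
      ↔ (∀ x y w : 𝔤,
          g (γ x y) w - g (γ y x) w - g x (γ y w) + g y (γ x w) = 0) :=
  semidirect_Omega4_closed_iff_general γ h_tf g br hbr Ω₄ hΩ₄
end
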